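/- Local (vertex-star) form of Theorem 3.1(1). Let (m, p_0, p) be a hyperbolic vertex star with edge weights c_j and vertex weight d_0. Suppose q_0 ∈ ℝ³ and q : ZMod m → ℝ³ satisfy ⟨q_j − q_0, p_j − p_0⟩_M = 0 for all j ∈ ZMod m and ⟨q_{j+1} − q_j, p_{j+1} − p_j⟩_M = 0 for all j ∈ ZMod m (an infinitesimal isometric deformation with respect to the Minkowski norm squared). Define f_0 := −⟨q_0, p_0⟩_M and f_j := −⟨q_j, p_j⟩_M (the radial coefficients, so that q_a = f_a·p_a + tangential part). Then ∑_{j∈ZMod m} c_j·(f_j − f_0) = 2·d_0·f_0; i.e. the radial component is a 2-eigenfunction of the discrete hyperbolic Laplacian at the central vertex. -/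

import Mathlib

noncomputable section

/-- Minkowski inner product on `ℝ³` (signature `(−,+,+)`). -/
def mink (x y : Fin 3 → ℝ) : ℝ := -(x 0 * y 0) + x 1 * y 1 + x 2 * y 2

/-- Cross product on `ℝ³` (Euclidean), used for the determinant. -/
def cross3 (x y : Fin 3 → ℝ) : Fin 3 → ℝ :=
  ![x 1 * y 2 - x 2 * y 1, x 2 * y 0 - x 0 * y 2, x 0 * y 1 - x 1 * y 0]

/-- Standard inner product on `ℝ³`. -/
def dot3 (x y : Fin 3 → ℝ) : ℝ := x 0 * y 0 + x 1 * y 1 + x 2 * y 2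

/-- Determinant of three vectors in `ℝ³`. -/
def det3 (x y z : Fin 3 → ℝ) : ℝ := dot3 (cross3 x y) z

/-- The hyperboloid model of the hyperbolic plane. -/
def inH2 (x : Fin 3 → ℝ) : Prop := mink x x = -1 ∧ 0 < x 0

/-- Inverse hyperbolic cosine. -/
def arcosh (x : ℝ) : ℝ := Real.log (x + Real.sqrt (x ^ 2 - 1))

/-- Hyperbolic angle at `p` between `b` and `c` (all points of `ℍ²`). -/
def hypAngle (p b c : Fin 3 → ℝ) : ℝ :=
  Real.arccos (mink (b + mink p b • p) (c + mink p c • p) /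
    (Real.sqrt (mink (b + mink p b • p) (b + mink p b • p)) *
     Real.sqrt (mink (c + mink p c • p) (c + mink p c • p))))

/-- Edge weight `c_j` of the edge `(p₀, p_j)` of a hyperbolic vertex star. -/
def hypStarWeight (m : ℕ) (p0 : Fin 3 → ℝ) (p : ZMod m → Fin 3 → ℝ) (j : ZMod m) : ℝ :=
  (Real.tan ((hypAngle p0 (p j) (p (j+1)) + hypAngle (p j) (p (j+1)) p0
      - hypAngle (p (j+1)) p0 (p j)) / 2)
   + Real.tan ((hypAngle p0 (p (j-1)) (p j) + hypAngle (p j) p0 (p (j-1))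
      - hypAngle (p (j-1)) (p j) p0) / 2))
  / (2 * Real.cosh (arcosh (-(mink p0 (p j))) / 2) ^ 2)

/-- Vertex weight `d₀` of a hyperbolic vertex star. -/
def hypStarVertexWeight (m : ℕ) [NeZero m] (p0 : Fin 3 → ℝ) (p : ZMod m → Fin 3 → ℝ) : ℝ :=
  ∑ j : ZMod m, hypStarWeight m p0 p j * Real.sinh (arcosh (-(mink p0 (p j))) / 2) ^ 2

/-!
By the hyperbolic law of cosines, in a triangle `(P, A, B)` of `ℍ²`
`tan ((α_P + α_A - α_B) / 2) = (cosh PB + cosh AB - cosh PA - 1) / |det (P, A, B)|`, so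
`c_j = τ(p₀, p_j, p_{j+1}) + τ(p₀, p_j, p_{j-1})` with `τ = hypTriangleWeight` rational in
Minkowski products and determinants.

Two identities then give the theorem. First, for each triangle, `τ(P,A,B) π(A) + τ(P,B,A) π(B)`
(`π` the tangential projection at `P`) is a term depending on `A` minus the same term for `B`;
summing around the star, `∑ c_j π(p_j) = 0`, which is the theorem for a translation `q ≡ q₀`.
Second, `c_j D_{j-1} D_j = det(p_{j-1} - p₀, p_j - p₀, p_{j+1} - p₀)` with
`D_j = det(p₀, p_j, p_{j+1})`, and the linear relation between four vectors of `ℝ³` together with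
`⟨q_j - q₀, p_j - p₀⟩ = 0` rewrites `∑ c_j ⟨q_j - q₀, p_j⟩` as
`∑ ⟨q_j - q_{j+1}, p_{j+1} - p_j⟩ / D_j = 0`. So the general case reduces to the translation.
-/

section Minkowski

lemma mink_comm (x y : Fin 3 → ℝ) : mink x y = mink y x := by
  simp only [mink]; ring

@[simp] lemma mink_add_left (x y z : Fin 3 → ℝ) : mink (x + y) z = mink x z + mink y z := by
  simp only [mink, Pi.add_apply]; ring

@[simp] lemma mink_add_right (x y z : Fin 3 → ℝ) : mink x (y + z) = mink x y + mink x z := by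
  simp only [mink, Pi.add_apply]; ring

@[simp] lemma mink_sub_left (x y z : Fin 3 → ℝ) : mink (x - y) z = mink x z - mink y z := by
  simp only [mink, Pi.sub_apply]; ring

@[simp] lemma mink_sub_right (x y z : Fin 3 → ℝ) : mink x (y - z) = mink x y - mink x z := by
  simp only [mink, Pi.sub_apply]; ring

@[simp] lemma mink_smul_right (a : ℝ) (x y : Fin 3 → ℝ) : mink x (a • y) = a * mink x y := by
  simp only [mink, Pi.smul_apply, smul_eq_mul]; ring

@[simp] lemma mink_smul_left (a : ℝ) (x y : Fin 3 → ℝ) : mink (a • x) y = a * mink x y := by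
  simp only [mink, Pi.smul_apply, smul_eq_mul]; ring

lemma det3_swap (a b c : Fin 3 → ℝ) : det3 a c b = -det3 a b c := by
  simp only [det3, dot3, cross3, Matrix.cons_val_zero, Matrix.cons_val_one, Matrix.cons_val_two,
    Matrix.head_cons, Matrix.tail_cons]
  ring

lemma det3_rotate (a b c : Fin 3 → ℝ) : det3 b c a = det3 a b c := by
  simp only [det3, dot3, cross3, Matrix.cons_val_zero, Matrix.cons_val_one, Matrix.cons_val_two,
    Matrix.head_cons, Matrix.tail_cons]
  ring

/-- Cauchy–Binet for the Minkowski form, whose determinant is `-1`. -/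
lemma det3_mul_det3 (a b c d e f : Fin 3 → ℝ) :
    det3 a b c * det3 d e f = -Matrix.det !![mink a d, mink a e, mink a f;
      mink b d, mink b e, mink b f; mink c d, mink c e, mink c f] := by
  rw [Matrix.det_fin_three]
  simp only [det3, dot3, cross3, mink, Matrix.cons_val_zero, Matrix.cons_val_one,
    Matrix.cons_val, Matrix.of_apply, Matrix.cons_val', Matrix.cons_val_fin_one]
  ring

/-- The linear relation `det(b,c,d) a - det(a,c,d) b + det(a,b,d) c - det(a,b,c) d = 0`,
rearranged around `b - d` and paired with `v`. -/
lemma det3_sub_mul_mink (a b c d v : Fin 3 → ℝ) :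
    det3 (a - d) (b - d) (c - d) * mink v b = det3 a b c * mink v (b - d)
      - det3 d b c * mink v (b - a) + det3 d a b * mink v (c - b) := by
  simp only [det3, dot3, cross3, mink, Matrix.cons_val_zero, Matrix.cons_val_one,
    Matrix.cons_val_two, Matrix.head_cons, Matrix.tail_cons, Pi.sub_apply]
  ring

end Minkowski

section Trigonometry

open Real

/-- When `cos (θ / 2) = 0` both sides are `0`, the left one by the junk value of `tan`. -/
lemma tan_half_eq_sin_div_one_add_cos (θ : ℝ) : tan (θ / 2) = sin θ / (1 + cos θ) := by
  have hsin : sin θ = 2 * sin (θ / 2) * cos (θ / 2) := by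
    rw [← sin_two_mul, mul_div_cancel₀ θ two_ne_zero]
  have hcos : 1 + cos θ = 2 * cos (θ / 2) ^ 2 := by
    rw [cos_sq, mul_div_cancel₀ θ two_ne_zero]; ring
  rw [tan_eq_sin_div_cos, hsin, hcos]
  rcases eq_or_ne (cos (θ / 2)) 0 with h | h
  · simp [h]
  · field_simp

lemma tan_half_eq_div_of_mul {θ K s n Q : ℝ} (hK : 0 < K) (hs : 0 < s) (hQ : 0 < Q)
    (hsin : sin θ * K = s * (n * Q)) (hcos : (1 + cos θ) * K = s ^ 2 * Q) :
    tan (θ / 2) = n / s := by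
  have hcos0 : 1 + cos θ ≠ 0 := by
    intro h
    rw [h, zero_mul] at hcos
    linarith [mul_pos (pow_pos hs 2) hQ]
  rw [tan_half_eq_sin_div_one_add_cos, div_eq_div_iff hcos0 hs.ne']
  apply mul_right_cancel₀ hK.ne'
  linear_combination s * hsin - n * hcos

lemma cos_sin_arccos_div {c s S : ℝ} (hS : 0 < S) (hs : 0 ≤ s) (h : c ^ 2 + s ^ 2 = S ^ 2) :
    cos (arccos (c / S)) = c / S ∧ sin (arccos (c / S)) = s / S := by
  have hsq : 1 - (c / S) ^ 2 = (s / S) ^ 2 := by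
    field_simp; linarith
  have hbound : |c / S| ≤ 1 := by
    rw [← sq_le_one_iff_abs_le_one]; nlinarith [sq_nonneg (s / S)]
  refine ⟨cos_arccos (abs_le.mp hbound).1 (abs_le.mp hbound).2, ?_⟩
  rw [sin_arccos, hsq, sqrt_sq (by positivity)]

/-- `x, y, z` are the `cosh` of the sides `PA, PB, AB` of a hyperbolic triangle and the three
`arccos` its angles at `P, A, B` (law of cosines); `s` is `sinh PA · sinh PB` times the sine of
the angle at `P`. -/
lemma tan_half_arccos_combination {x y z s : ℝ} (hx : 1 < x) (hy : 1 < y) (hz : 1 < z)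
    (hs : 0 < s) (hs2 : s ^ 2 = 1 + 2 * x * y * z - x ^ 2 - y ^ 2 - z ^ 2) :
    tan ((arccos ((x * y - z) / (√(x ^ 2 - 1) * √(y ^ 2 - 1)))
        + arccos ((z * x - y) / (√(z ^ 2 - 1) * √(x ^ 2 - 1)))
        - arccos ((y * z - x) / (√(y ^ 2 - 1) * √(z ^ 2 - 1)))) / 2)
      = (y + z - x - 1) / s := by
  have hSx : √(x ^ 2 - 1) ^ 2 = x ^ 2 - 1 := sq_sqrt (by nlinarith)
  have hSy : √(y ^ 2 - 1) ^ 2 = y ^ 2 - 1 := sq_sqrt (by nlinarith)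
  have hSz : √(z ^ 2 - 1) ^ 2 = z ^ 2 - 1 := sq_sqrt (by nlinarith)
  have hSx0 : 0 < √(x ^ 2 - 1) := sqrt_pos.mpr (by nlinarith)
  have hSy0 : 0 < √(y ^ 2 - 1) := sqrt_pos.mpr (by nlinarith)
  have hSz0 : 0 < √(z ^ 2 - 1) := sqrt_pos.mpr (by nlinarith)
  set Sx := √(x ^ 2 - 1)
  set Sy := √(y ^ 2 - 1)
  set Sz := √(z ^ 2 - 1)
  obtain ⟨hcα, hsα⟩ := cos_sin_arccos_div (c := x * y - z) (mul_pos hSx0 hSy0) hs.le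
    (by linear_combination hs2 - Sy ^ 2 * hSx - (x ^ 2 - 1) * hSy)
  obtain ⟨hcβ, hsβ⟩ := cos_sin_arccos_div (c := z * x - y) (mul_pos hSz0 hSx0) hs.le
    (by linear_combination hs2 - Sx ^ 2 * hSz - (z ^ 2 - 1) * hSx)
  obtain ⟨hcγ, hsγ⟩ := cos_sin_arccos_div (c := y * z - x) (mul_pos hSy0 hSz0) hs.le
    (by linear_combination hs2 - Sz ^ 2 * hSy - (y ^ 2 - 1) * hSz)
  set θ := arccos ((x * y - z) / (Sx * Sy)) + arccos ((z * x - y) / (Sz * Sx))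
    - arccos ((y * z - x) / (Sy * Sz))
  have hK : 0 < Sx ^ 2 * Sy ^ 2 * Sz ^ 2 := by positivity
  have hsin : sin θ * (Sx ^ 2 * Sy ^ 2 * Sz ^ 2)
      = s * ((y + z - x - 1) * ((x - 1) * (y + 1) * (z + 1))) := by
    simp only [θ, sin_sub, sin_add, cos_add, hcα, hsα, hcβ, hsβ, hcγ, hsγ]
    field_simp
    linear_combination hs2
  have hcos : (1 + cos θ) * (Sx ^ 2 * Sy ^ 2 * Sz ^ 2)
      = s ^ 2 * ((x - 1) * (y + 1) * (z + 1)) := by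
    simp only [θ, cos_sub, sin_add, cos_add, hcα, hsα, hcβ, hsβ, hcγ, hsγ]
    field_simp
    linear_combination (Sy ^ 2 * Sz ^ 2) * hSx + ((x ^ 2 - 1) * Sz ^ 2) * hSy
      + ((x ^ 2 - 1) * (y ^ 2 - 1)) * hSz
      + (-(y * z - x) + (z * x - y) + (x * y - z) - (y + 1) * (z + 1) * (x - 1)) * hs2
  have hQ : 0 < (x - 1) * (y + 1) * (z + 1) := by
    have : 0 < x - 1 := by linarith
    positivity
  exact tan_half_eq_div_of_mul hK hs hQ hsin hcos

end Trigonometry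

lemma cosh_sq_half_arcosh {t : ℝ} (ht : 1 ≤ t) : Real.cosh (arcosh t / 2) ^ 2 = (t + 1) / 2 := by
  have h : Real.cosh (arcosh t) = t := Real.cosh_arcosh ht
  rw [show arcosh t = 2 * (arcosh t / 2) by ring, Real.cosh_two_mul] at h
  linarith [Real.cosh_sq_sub_sinh_sq (arcosh t / 2)]

lemma sinh_sq_half_arcosh {t : ℝ} (ht : 1 ≤ t) : Real.sinh (arcosh t / 2) ^ 2 = (t - 1) / 2 := by
  have h : Real.cosh (arcosh t) = t := Real.cosh_arcosh ht
  rw [show arcosh t = 2 * (arcosh t / 2) by ring, Real.cosh_two_mul] at h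
  linarith [Real.cosh_sq_sub_sinh_sq (arcosh t / 2)]

section Hyperboloid

variable {P A B C : Fin 3 → ℝ}

lemma det3_sq_of_mink_self (hP : mink P P = -1) (hA : mink A A = -1) (hB : mink B B = -1) :
    det3 P A B ^ 2 = 1 + 2 * -(mink P A) * -(mink P B) * -(mink A B)
      - (-(mink P A)) ^ 2 - (-(mink P B)) ^ 2 - (-(mink A B)) ^ 2 := by
  rw [sq, det3_mul_det3, Matrix.det_fin_three]
  simp only [Matrix.of_apply, Matrix.cons_val', Matrix.cons_val_zero, Matrix.cons_val_one,
    Matrix.cons_val, Matrix.cons_val_fin_one, hP, hA, hB, mink_comm A P, mink_comm B P,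
    mink_comm B A]
  ring

lemma one_le_neg_mink (hP : inH2 P) (hA : inH2 A) : 1 ≤ -mink P A := by
  obtain ⟨hP1, hP2⟩ := hP
  obtain ⟨hA1, hA2⟩ := hA
  simp only [mink] at *
  nlinarith [sq_nonneg (P 1 - A 1), sq_nonneg (P 2 - A 2),
    sq_nonneg (P 1 * A 2 - P 2 * A 1), mul_pos hP2 hA2, sq_nonneg (P 0 * A 0 - 1)]

lemma one_lt_neg_mink (hP : inH2 P) (hA : inH2 A) (hB : inH2 B) (hD : det3 P A B ≠ 0) :
    1 < -mink P A := by
  refine (one_le_neg_mink hP hA).lt_of_ne fun h => ?_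
  have hsq := det3_sq_of_mink_self hP.1 hA.1 hB.1
  rw [← h] at hsq
  nlinarith [sq_nonneg (-(mink P B) - -(mink A B)), pow_pos (abs_pos.mpr hD) 2,
    sq_abs (det3 P A B)]

lemma mink_tangent (hP : mink P P = -1) :
    mink (A + mink P A • P) (B + mink P B • P) = mink A B + mink P A * mink P B := by
  simp only [mink_add_left, mink_add_right, mink_smul_left, mink_smul_right, hP, mink_comm A P]
  ring

lemma hypAngle_eq_arccos (hP : mink P P = -1) (hA : mink A A = -1) (hB : mink B B = -1) :
    hypAngle P A B = Real.arccos ((-(mink P A) * -(mink P B) - -(mink A B)) /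
      (√((-(mink P A)) ^ 2 - 1) * √((-(mink P B)) ^ 2 - 1))) := by
  rw [hypAngle, mink_tangent hP, mink_tangent hP, mink_tangent hP, hA, hB]
  congr 1
  ring_nf

lemma hypAngle_comm (p b c : Fin 3 → ℝ) : hypAngle p b c = hypAngle p c b := by
  rw [hypAngle, hypAngle, mink_comm (b + _), mul_comm (√_)]

lemma tan_half_hypAngle (hP : inH2 P) (hA : inH2 A) (hB : inH2 B) (hD : det3 P A B ≠ 0) :
    Real.tan ((hypAngle P A B + hypAngle A B P - hypAngle B P A) / 2)
      = (-(mink P B) + -(mink A B) - -(mink P A) - 1) / |det3 P A B| := by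
  have hx := one_lt_neg_mink hP hA hB hD
  have hy := one_lt_neg_mink hP hB hA (by rwa [det3_swap, neg_ne_zero])
  have hz := one_lt_neg_mink hA hB hP (by rwa [det3_rotate])
  rw [hypAngle_eq_arccos hP.1 hA.1 hB.1, hypAngle_eq_arccos hA.1 hB.1 hP.1,
    hypAngle_eq_arccos hB.1 hP.1 hA.1, mink_comm A P, mink_comm B P, mink_comm B A]
  exact tan_half_arccos_combination hx hy hz (abs_pos.mpr hD)
    (by rw [sq_abs]; exact det3_sq_of_mink_self hP.1 hA.1 hB.1)

/-- `tan ((α_P + α_A - α_B) / 2) / (2 cosh² (d(P, A) / 2))` for the triangle `(P, A, B)`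
(`tan_half_hypAngle_div`): the share of this triangle in the weight of the edge `(P, A)`. -/
def hypTriangleWeight (P A B : Fin 3 → ℝ) : ℝ :=
  (-(mink P B) + -(mink A B) - -(mink P A) - 1) / ((-(mink P A) + 1) * |det3 P A B|)

lemma tan_half_hypAngle_div (hP : inH2 P) (hA : inH2 A) (hB : inH2 B) (hD : det3 P A B ≠ 0) :
    Real.tan ((hypAngle P A B + hypAngle A B P - hypAngle B P A) / 2)
      / (2 * Real.cosh (arcosh (-mink P A) / 2) ^ 2) = hypTriangleWeight P A B := by
  rw [tan_half_hypAngle hP hA hB hD, cosh_sq_half_arcosh (one_le_neg_mink hP hA),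
    hypTriangleWeight]
  field_simp

lemma hypTriangleWeight_add_mul (hP : inH2 P) (hB : inH2 B) (hAB : 0 < det3 P A B)
    (hBC : 0 < det3 P B C) :
    (hypTriangleWeight P B C + hypTriangleWeight P B A) * (det3 P A B * det3 P B C)
      = det3 (A - P) (B - P) (C - P) := by
  have hx : 0 < -mink P B + 1 := by linarith [one_le_neg_mink hP hB]
  have hvB := det3_sub_mul_mink A B C P B
  have hvP := det3_sub_mul_mink A B C P P
  simp only [mink_sub_right, mink_comm B P] at hvB hvP
  rw [hypTriangleWeight, hypTriangleWeight, det3_swap P A B, abs_neg, abs_of_pos hAB,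
    abs_of_pos hBC]
  field_simp
  linear_combination hvB + hvP - det3 A B C * hP.1
    + (det3 A B C - det3 P A B - det3 P B C - det3 (A - P) (B - P) (C - P)) * hB.1

lemma hypTriangleWeight_mul_mink_tangent (hP : inH2 P) (hA : inH2 A) (hB : inH2 B)
    (hD : 0 < det3 P A B) (v : Fin 3 → ℝ) :
    hypTriangleWeight P A B * mink v (A + mink P A • P)
        + hypTriangleWeight P B A * mink v (B + mink P B • P)
      = det3 P A v / (-mink P A + 1) - det3 P B v / (-mink P B + 1) := by
  have hx : 0 < -mink P A + 1 := by linarith [one_le_neg_mink hP hA]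
  have hy : 0 < -mink P B + 1 := by linarith [one_le_neg_mink hP hB]
  have hAv := det3_mul_det3 P A B P A v
  have hBv := det3_mul_det3 P A B P B v
  rw [Matrix.det_fin_three] at hAv hBv
  simp only [Matrix.of_apply, Matrix.cons_val', Matrix.cons_val_zero, Matrix.cons_val_one,
    Matrix.cons_val, Matrix.cons_val_fin_one, hP.1, hA.1, hB.1, mink_comm A P, mink_comm B P,
    mink_comm B A] at hAv hBv
  rw [hypTriangleWeight, hypTriangleWeight, det3_swap P A B, abs_neg, abs_of_pos hD]
  simp only [mink_add_right, mink_smul_right, mink_comm B A, mink_comm v P, mink_comm v A,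
    mink_comm v B]
  field_simp
  linear_combination (-mink P A + 1) * hBv - (-mink P B + 1) * hAv

end Hyperboloid

section VertexStar

variable {m : ℕ} {p0 : Fin 3 → ℝ} {p : ZMod m → Fin 3 → ℝ}

lemma hypStarWeight_eq (hp0 : inH2 p0) (hp : ∀ j, inH2 (p j))
    (hdet : ∀ j, det3 p0 (p j) (p (j + 1)) ≠ 0) (j : ZMod m) :
    hypStarWeight m p0 p j
      = hypTriangleWeight p0 (p j) (p (j + 1)) + hypTriangleWeight p0 (p j) (p (j - 1)) := by
  have hprev : det3 p0 (p j) (p (j - 1)) ≠ 0 := by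
    rw [det3_swap, neg_ne_zero]; simpa using hdet (j - 1)
  rw [hypStarWeight, add_div, tan_half_hypAngle_div hp0 (hp j) (hp (j + 1)) (hdet j),
    hypAngle_comm p0 (p (j - 1)), hypAngle_comm (p j) p0, hypAngle_comm (p (j - 1)) (p j),
    tan_half_hypAngle_div hp0 (hp j) (hp (j - 1)) hprev]

variable [NeZero m]

lemma hypStarVertexWeight_eq (hp0 : inH2 p0) (hp : ∀ j, inH2 (p j)) :
    hypStarVertexWeight m p0 p = ∑ j, hypStarWeight m p0 p j * ((-mink p0 (p j) - 1) / 2) :=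
  Finset.sum_congr rfl fun j _ => by rw [sinh_sq_half_arcosh (one_le_neg_mink hp0 (hp j))]

lemma sum_hypStarWeight_mul_mink_tangent (hp0 : inH2 p0) (hp : ∀ j, inH2 (p j))
    (hdet : ∀ j, 0 < det3 p0 (p j) (p (j + 1))) (v : Fin 3 → ℝ) :
    ∑ j, hypStarWeight m p0 p j * mink v (p j + mink p0 (p j) • p0) = 0 := by
  have hshift : ∑ j, hypTriangleWeight p0 (p j) (p (j - 1)) * mink v (p j + mink p0 (p j) • p0)
      = ∑ j, hypTriangleWeight p0 (p (j + 1)) (p j)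
          * mink v (p (j + 1) + mink p0 (p (j + 1)) • p0) :=
    (Fintype.sum_equiv (Equiv.addRight 1) _ _ fun j => by simp).symm
  simp only [hypStarWeight_eq hp0 hp (fun j => (hdet j).ne'), add_mul]
  rw [Finset.sum_add_distrib, hshift, ← Finset.sum_add_distrib,
    Finset.sum_congr rfl fun j _ =>
      hypTriangleWeight_mul_mink_tangent hp0 (hp j) (hp (j + 1)) (hdet j) v,
    Finset.sum_sub_distrib, sub_eq_zero]
  exact (Fintype.sum_equiv (Equiv.addRight 1) _ _ fun _ => rfl).symm

lemma sum_hypStarWeight_mul_mink_sub (hp0 : inH2 p0) (hp : ∀ j, inH2 (p j))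
    (hdet : ∀ j, 0 < det3 p0 (p j) (p (j + 1))) {q0 : Fin 3 → ℝ} {q : ZMod m → Fin 3 → ℝ}
    (hiso0 : ∀ j, mink (q j - q0) (p j - p0) = 0)
    (hiso1 : ∀ j, mink (q (j + 1) - q j) (p (j + 1) - p j) = 0) :
    ∑ j, hypStarWeight m p0 p j * mink (q j - q0) (p j) = 0 := by
  have hvertex : ∀ j, hypStarWeight m p0 p j * mink (q j - q0) (p j)
      = mink (q j - q0) (p (j + 1) - p j) / det3 p0 (p j) (p (j + 1))
        - mink (q j - q0) (p j - p (j - 1)) / det3 p0 (p (j - 1)) (p j) := by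
    intro j
    have hprev : 0 < det3 p0 (p (j - 1)) (p j) := by simpa using hdet (j - 1)
    have hvolume := hypTriangleWeight_add_mul hp0 (hp j) hprev (hdet j)
    have hrelation := det3_sub_mul_mink (p (j - 1)) (p j) (p (j + 1)) p0 (q j - q0)
    rw [hiso0 j] at hrelation
    rw [hypStarWeight_eq hp0 hp (fun j => (hdet j).ne') j, div_sub_div _ _ (hdet j).ne' hprev.ne',
      eq_div_iff (mul_ne_zero (hdet j).ne' hprev.ne')]
    linear_combination mink (q j - q0) (p j) * hvolume + hrelation
  rw [Finset.sum_congr rfl fun j _ => hvertex j, Finset.sum_sub_distrib, sub_eq_zero]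
  refine Fintype.sum_equiv (Equiv.addRight 1) _ _ fun j => ?_
  have h := hiso1 j
  simp only [Equiv.coe_addRight, add_sub_cancel_right, mink_sub_left] at h ⊢
  rw [show mink (q j) (p (j + 1) - p j) = mink (q (j + 1)) (p (j + 1) - p j) by linarith]

end VertexStar

theorem hyp_inf_iso_radial_eigen_general
    (m : ℕ) [NeZero m]
    (p0 : Fin 3 → ℝ) (p : ZMod m → Fin 3 → ℝ)
    (hp0 : inH2 p0) (hp : ∀ j, inH2 (p j))
    (hdet : ∀ j : ZMod m, 0 < det3 p0 (p j) (p (j+1)))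
    (q0 : Fin 3 → ℝ) (q : ZMod m → Fin 3 → ℝ)
    (hiso0 : ∀ j : ZMod m, mink (q j - q0) (p j - p0) = 0)
    (hiso1 : ∀ j : ZMod m, mink (q (j+1) - q j) (p (j+1) - p j) = 0) :
    ∑ j : ZMod m, hypStarWeight m p0 p j * (-(mink (q j) (p j)) - -(mink q0 p0))
      = 2 * hypStarVertexWeight m p0 p * (-(mink q0 p0)) := by
  have hsum : ∑ j, hypStarWeight m p0 p j
      * (mink (q j - q0) (p j) + mink q0 (p j + mink p0 (p j) • p0)) = 0 := by
    rw [Finset.sum_congr rfl fun j _ => mul_add _ _ _, Finset.sum_add_distrib,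
      sum_hypStarWeight_mul_mink_sub hp0 hp hdet hiso0 hiso1,
      sum_hypStarWeight_mul_mink_tangent hp0 hp hdet q0, add_zero]
  rw [hypStarVertexWeight_eq hp0 hp, Finset.mul_sum, Finset.sum_mul, ← sub_eq_zero,
    ← Finset.sum_sub_distrib, ← neg_eq_zero, ← Finset.sum_neg_distrib, ← hsum]
  refine Finset.sum_congr rfl fun j _ => ?_
  simp only [mink_sub_left, mink_add_right, mink_smul_right, mink_comm q0 p0]
  ring

/-- Local (vertex-star) form of Theorem 3.1(1): the radial coefficient of an infinitesimal
isometric deformation (with respect to the Minkowski norm squared) of a polyhedron inscribed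
in the hyperboloid is a `2`-eigenfunction of the discrete hyperbolic Laplacian at the
central vertex. -/
theorem hyp_inf_iso_radial_eigen
    (m : ℕ) (hm : 3 ≤ m) [NeZero m]
    (p0 : Fin 3 → ℝ) (p : ZMod m → Fin 3 → ℝ)
    (hp0 : inH2 p0) (hp : ∀ j, inH2 (p j))
    (hdet : ∀ j : ZMod m, 0 < det3 p0 (p j) (p (j+1)))
    (q0 : Fin 3 → ℝ) (q : ZMod m → Fin 3 → ℝ)
    (hiso0 : ∀ j : ZMod m, mink (q j - q0) (p j - p0) = 0)
    (hiso1 : ∀ j : ZMod m, mink (q (j+1) - q j) (p (j+1) - p j) = 0) :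
    ∑ j : ZMod m, hypStarWeight m p0 p j * (-(mink (q j) (p j)) - -(mink q0 p0))
      = 2 * hypStarVertexWeight m p0 p * (-(mink q0 p0)) :=
  hyp_inf_iso_radial_eigen_general m p0 p hp0 hp hdet q0 q hiso0 hiso1
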